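/- The mutation operator M is regular on (X_N, d): the set of periodic points of M (points X with M^n(X) = X for some n ≥ 1) is dense in X_N; that is, every open ball B(X, ε) with X ∈ X_N and ε > 0 contains a periodic point of M. -/
import Mathlib


/-- The discrete metric on ℝ: `ddelta x y = 1` if `x ≠ y`, and `0` otherwise. -/
noncomputable def ddelta (x y : ℝ) : ℝ := if x = y then 0 else 1

/-- `Fdel (x₁, x₂) = |x₁| + δ(0, x₂)`. -/
noncomputable def Fdel (x : ℝ × ℝ) : ℝ := |x.1| + ddelta 0 x.2

/-- A single mutation: a position in `{1,…,N}` together with a nucleotide in `{1,2,3,4}`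
(encoded with `Fin N` and `Fin 4`). -/
abbrev Mut (N : ℕ) := Fin N × Fin 4

/-- A mutations sequence: an infinite sequence of mutations. -/
abbrev MutSeq (N : ℕ) := ℕ → Mut N

/-- A genome of size `N`: a sequence of `N` nucleotides in `{1,2,3,4}` (encoded by `Fin 4`,
where `0,1,2,3` stand for the labels `1,2,3,4`, i.e. `A,C,G,T`). -/
abbrev Genome (N : ℕ) := Fin N → Fin 4

/-- The phase space `X_N = {1,2,3,4}^N × S_N`. -/
abbrev Phase (N : ℕ) := Genome N × MutSeq N

/-- A mutation regarded as a pair of real numbers, using the labels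
`1,…,N` for positions and `1,2,3,4` for nucleotides. -/
noncomputable def mutR {N : ℕ} (m : Mut N) : ℝ × ℝ :=
  ((m.1.1 : ℝ) + 1, (m.2.1 : ℝ) + 1)

/-- `d_G(G, Ǧ) = Σ_{k=1}^{N} δ(G_k, Ǧ_k)`, with `δ` the discrete metric. -/
noncomputable def dG {N : ℕ} (G G' : Genome N) : ℝ :=
  ∑ k : Fin N, if G k = G' k then (0 : ℝ) else 1

/-- `d_S(S, Š) = (9/N) Σ_{k=0}^{∞} F(S^k − Š^k)/10^(k+1)`. -/
noncomputable def dS {N : ℕ} (S S' : MutSeq N) : ℝ :=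
  (9 / N) * ∑' k : ℕ, Fdel (mutR (S k) - mutR (S' k)) / 10 ^ (k + 1)

/-- The distance `d((G,S), (Ǧ,Š)) = d_G(G,Ǧ) + d_S(S,Š)` on the phase space. -/
noncomputable def dX {N : ℕ} (X Y : Phase N) : ℝ := dG X.1 Y.1 + dS X.2 Y.2

/-- The mutation operator `M(G, S) = (G', σ(S))`: the nucleotide of `G` at position `(S⁰)₁`
is replaced by the nucleotide `(S⁰)₂`, and the mutations sequence is shifted. -/
noncomputable def Mop {N : ℕ} (X : Phase N) : Phase N :=
  (Function.update X.1 (X.2 0).1 (X.2 0).2, fun k => X.2 (k + 1))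

/-- A set `U ⊆ X_N` is open for the metric `d` if around any of its points it
contains an open ball of positive radius. -/
def IsOpenD {N : ℕ} (U : Set (Phase N)) : Prop :=
  ∀ x ∈ U, ∃ ε > 0, ∀ y, dX x y < ε → y ∈ U


noncomputable def evolve {N : ℕ} (G : Genome N) (S : MutSeq N) : ℕ → Genome N
  | 0 => G
  | m + 1 => Function.update (evolve G S m) (S m).1 (S m).2

lemma Mop_iterate {N : ℕ} (G : Genome N) (S : MutSeq N) (m : ℕ) :
    (Mop (N := N))^[m] (G, S) = (evolve G S m, fun k => S (k + m)) := by
  induction m with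
  | zero => rfl
  | succ m ih =>
    rw [Function.iterate_succ_apply', ih]
    refine Prod.ext ?_ ?_
    · simp [Mop, evolve]
    · funext k
      show S (k + 1 + m) = S (k + (m + 1))
      congr 1
      omega

lemma Fdel_le {N : ℕ} (hN : 1 ≤ N) (a b : Mut N) : Fdel (mutR a - mutR b) ≤ N := by
  have hNc : ((N - 1 : ℕ) : ℝ) = (N : ℝ) - 1 := by
    push_cast [Nat.cast_sub hN]; ring
  have ha : (a.1.1 : ℝ) ≤ (N : ℝ) - 1 := by
    rw [← hNc]; exact_mod_cast Nat.le_pred_of_lt a.1.isLt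
  have hb : (b.1.1 : ℝ) ≤ (N : ℝ) - 1 := by
    rw [← hNc]; exact_mod_cast Nat.le_pred_of_lt b.1.isLt
  have ha0 : (0 : ℝ) ≤ (a.1.1 : ℝ) := Nat.cast_nonneg _
  have hb0 : (0 : ℝ) ≤ (b.1.1 : ℝ) := Nat.cast_nonneg _
  have habs : |((a.1.1 : ℝ) + 1) - ((b.1.1 : ℝ) + 1)| ≤ (N : ℝ) - 1 := by
    rw [abs_sub_le_iff]; constructor <;> linarith
  have hd : ddelta 0 (((a.2.1 : ℝ) + 1) - ((b.2.1 : ℝ) + 1)) ≤ 1 := by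
    unfold ddelta; split <;> norm_num
  simp only [Fdel, mutR, Prod.fst_sub, Prod.snd_sub]
  linarith

set_option maxHeartbeats 1000000

lemma Fdel_nonneg (x : ℝ × ℝ) : 0 ≤ Fdel x := by
  have := abs_nonneg x.1
  unfold Fdel ddelta
  split <;> linarith

/-- The mutation operator `M` is regular on `(X_N, d)`: its periodic points are dense,
i.e. every open ball `B(X, ε)` contains a point `Y` with `M^n(Y) = Y` for some `n ≥ 1`. -/
theorem Mop_regular (N : ℕ) (hN : 1 ≤ N) :
    ∀ X : Phase N, ∀ ε > (0 : ℝ),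
      ∃ Y : Phase N, dX X Y < ε ∧ ∃ n : ℕ, 1 ≤ n ∧ (Mop (N := N))^[n] Y = Y := by
  intro X ε hε
  obtain ⟨G, S⟩ := X
  have hN0 : 0 < N := hN
  obtain ⟨n, hn⟩ : ∃ n : ℕ, (1 / 10 : ℝ) ^ n < ε :=
    exists_pow_lt_of_lt_one hε (by norm_num)
  set p := n + N with hp
  have hpn : ∀ j, j < N → n + j < p := by intro j hj; omega
  -- the periodic mutations sequence
  set block : ℕ → Mut N := fun j =>
    if h : j < n then S j
    else (⟨(j - n) % N, Nat.mod_lt _ hN0⟩, G ⟨(j - n) % N, Nat.mod_lt _ hN0⟩) with hblock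
  set S' : MutSeq N := fun k => block (k % p) with hS'def
  have hS'lt : ∀ k, k < n → S' k = S k := by
    intro k hk
    simp only [hS'def, hblock]
    rw [Nat.mod_eq_of_lt (by omega)]
    exact dif_pos hk
  have hS'corr : ∀ j (hj : j < N), S' (n + j) = (⟨j, hj⟩, G ⟨j, hj⟩) := by
    intro j hj
    simp only [hS'def, hblock]
    rw [Nat.mod_eq_of_lt (hpn j hj)]
    rw [dif_neg (by omega)]
    simp [Nat.add_sub_cancel_left, Nat.mod_eq_of_lt hj]
  refine ⟨(G, S'), ?_, p, by omega, ?_⟩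
  · -- distance bound
    have hdG : dG G G = 0 := by simp [dG]
    set f : ℕ → ℝ := fun k => Fdel (mutR (S k) - mutR (S' k)) / 10 ^ (k + 1) with hf
    have hf0 : ∀ k, 0 ≤ f k := fun k => div_nonneg (Fdel_nonneg _) (by positivity)
    have hfg : ∀ k, f k ≤ (N : ℝ) * (1 / 10) ^ (k + 1) := by
      intro k
      have h1 : Fdel (mutR (S k) - mutR (S' k)) ≤ N := Fdel_le hN _ _
      have h2 : (0 : ℝ) < 10 ^ (k + 1) := by positivity
      rw [div_le_iff₀ h2]
      calc Fdel (mutR (S k) - mutR (S' k)) ≤ (N : ℝ) := h1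
        _ = (N : ℝ) * (1 / 10) ^ (k + 1) * 10 ^ (k + 1) := by
            rw [mul_assoc, div_pow, one_pow, div_mul_cancel₀]; · ring
            positivity
    have hgsum : Summable (fun k : ℕ => (N : ℝ) * (1 / 10) ^ (k + 1)) := by
      have : Summable (fun k : ℕ => (1 / 10 : ℝ) ^ k) :=
        summable_geometric_of_lt_one (by norm_num) (by norm_num)
      simpa [pow_succ, mul_comm, mul_assoc, mul_left_comm] using
        (this.mul_left ((N : ℝ) * (1 / 10)))
    have hfsum : Summable f := Summable.of_nonneg_of_le hf0 hfg hgsum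
    have hvanish : ∀ k < n, f k = 0 := by
      intro k hk
      simp [hf, hS'lt k hk, Fdel, ddelta]
    have key : ∑' k, f k ≤ (1 / 10 : ℝ) ^ n * (N : ℝ) * (1 / 9) := by
      rw [← Summable.sum_add_tsum_nat_add n hfsum]
      have h1 : ∑ i ∈ Finset.range n, f i = 0 :=
        Finset.sum_eq_zero fun i hi => hvanish i (Finset.mem_range.mp hi)
      rw [h1, zero_add]
      have h2 : ∑' k : ℕ, f (k + n) ≤ ∑' k : ℕ, (N : ℝ) * (1 / 10) ^ (k + n + 1) := by
        refine Summable.tsum_le_tsum (fun k => hfg (k + n)) ((summable_nat_add_iff n).2 hfsum) ?_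
        exact (summable_nat_add_iff n).2 hgsum
      refine h2.trans (le_of_eq ?_)
      have h3 : ∀ k : ℕ, (N : ℝ) * (1 / 10) ^ (k + n + 1) =
          ((N : ℝ) * (1 / 10) ^ (n + 1)) * (1 / 10) ^ k := by
        intro k; rw [show k + n + 1 = (n + 1) + k by omega, pow_add]; ring
      calc ∑' k : ℕ, (N : ℝ) * (1 / 10) ^ (k + n + 1)
          = ((N : ℝ) * (1 / 10) ^ (n + 1)) * ∑' k : ℕ, (1 / 10 : ℝ) ^ k := by
            rw [← tsum_mul_left]; exact tsum_congr h3
        _ = ((N : ℝ) * (1 / 10) ^ (n + 1)) * (1 - 1 / 10)⁻¹ := by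
            rw [tsum_geometric_of_lt_one (by norm_num) (by norm_num)]
        _ = (1 / 10 : ℝ) ^ n * (N : ℝ) * (1 / 9) := by
            rw [pow_succ]; norm_num; ring
    have hdS : dS S S' ≤ (1 / 10 : ℝ) ^ n := by
      have hN' : (0 : ℝ) < N := by exact_mod_cast hN0
      unfold dS
      rw [← hf]
      calc (9 / (N : ℝ)) * ∑' k, f k
            ≤ (9 / (N : ℝ)) * ((1 / 10 : ℝ) ^ n * N * (1 / 9)) :=
            mul_le_mul_of_nonneg_left key (by positivity)
        _ = (1 / 10 : ℝ) ^ n * ((N : ℝ) / N) := by ring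
        _ = (1 / 10 : ℝ) ^ n := by rw [div_self hN'.ne']; ring
    show dG G G + dS S S' < ε
    rw [hdG, zero_add]
    exact lt_of_le_of_lt hdS hn
  · -- periodicity
    rw [Mop_iterate]
    refine Prod.ext ?_ ?_
    · -- genome returns to G
      show evolve G S' p = G
      have claim : ∀ j, j ≤ N → ∀ i : Fin N, (i : ℕ) < j → evolve G S' (n + j) i = G i := by
        intro j
        induction j with
        | zero => intro _ i hi; omega
        | succ j ih =>
          intro hj i hi
          have hjN : j < N := by omega
          have hcorr := hS'corr j hjN
          have hev : evolve G S' (n + (j + 1)) =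
              Function.update (evolve G S' (n + j)) (S' (n + j)).1 (S' (n + j)).2 := by
            rw [show n + (j + 1) = (n + j) + 1 by omega]
            rfl
          rw [hev, hcorr]
          by_cases hij : i = (⟨j, hjN⟩ : Fin N)
          · subst hij; simp
          · rw [Function.update_of_ne hij]
            exact ih (by omega) i (by
              have : (i : ℕ) ≠ j := fun h => hij (Fin.ext h)
              omega)
      funext i
      exact claim N le_rfl i i.isLt
    · -- sequence is periodic
      funext k
      show S' (k + p) = S' k
      simp only [hS'def]
      rw [Nat.add_mod_right]
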